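/- For every k ≥ 1 and every choice of 2k signs ε_1, δ_1, …, ε_k, δ_k ∈ {+1, −1}, the polynomial p_k^σ(x_1,y_1,…,x_k,y_k) = tr(A^{ε_1(1+x_1)} B^{δ_1(1+y_1)} ⋯ A^{ε_k(1+x_k)} B^{δ_k(1+y_k)}), where A^x = [[1,2x],[0,1]] and B^y = [[1,0],[-2y,1]], has all coefficients of the same sign (all nonnegative or all nonpositive). -/

import Mathlib

open Matrix MvPolynomial

section Aux

variable {σ : Type*}

local notation "R" => MvPolynomial σ ℤ

/-- all coefficients nonnegative -/
def AllNN (p : MvPolynomial σ ℤ) : Prop := ∀ m, 0 ≤ MvPolynomial.coeff m p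

lemma AllNN_add {p q : R} (hp : AllNN p) (hq : AllNN q) : AllNN (p + q) := by
  intro m; rw [MvPolynomial.coeff_add]; exact add_nonneg (hp m) (hq m)

lemma AllNN_mul {p q : R} (hp : AllNN p) (hq : AllNN q) : AllNN (p * q) := by
  classical
  intro m; rw [MvPolynomial.coeff_mul]
  exact Finset.sum_nonneg fun x _ => mul_nonneg (hp _) (hq _)

lemma AllNN_C {c : ℤ} (hc : 0 ≤ c) : AllNN (MvPolynomial.C c : MvPolynomial σ ℤ) := by
  intro m; classical
  rw [MvPolynomial.coeff_C]
  split <;> simp [hc]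

lemma AllNN_X (v : σ) : AllNN (MvPolynomial.X v : MvPolynomial σ ℤ) := by
  intro m; classical
  rw [MvPolynomial.coeff_X']
  split <;> norm_num

lemma AllNN_zero : AllNN (0 : R) := by intro m; simp

lemma AllNN_one : AllNN (1 : R) := by
  have := AllNN_C (σ := σ) (c := 1) (by norm_num)
  simpa using this

/-- matrix with all entry coefficients nonnegative -/
def MatNN (P : Matrix (Fin 2) (Fin 2) (MvPolynomial σ ℤ)) : Prop := ∀ i j, AllNN (P i j)

lemma MatNN_one : MatNN (1 : Matrix (Fin 2) (Fin 2) R) := by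
  intro i j
  rw [Matrix.one_apply]
  split
  · exact AllNN_one
  · exact AllNN_zero

lemma MatNN_mul {P Q : Matrix (Fin 2) (Fin 2) R} (hP : MatNN P) (hQ : MatNN Q) :
    MatNN (P * Q) := by
  intro i j
  have : (P * Q) i j = P i 0 * Q 0 j + P i 1 * Q 1 j := by
    rw [Matrix.mul_apply, Fin.sum_univ_two]
  rw [this]
  exact AllNN_add (AllNN_mul (hP i 0) (hQ 0 j)) (AllNN_mul (hP i 1) (hQ 1 j))

lemma MatNN_prod (l : List (Matrix (Fin 2) (Fin 2) R))
    (h : ∀ M ∈ l, MatNN M ∨ MatNN (-M)) :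
    MatNN l.prod ∨ MatNN (-l.prod) := by
  induction l with
  | nil => left; simpa using MatNN_one
  | cons M t ih =>
    have hM := h M List.mem_cons_self
    have ht := ih (fun N hN => h N (List.mem_cons_of_mem M hN))
    rw [List.prod_cons]
    rcases hM with hM | hM <;> rcases ht with ht | ht
    · left; exact MatNN_mul hM ht
    · right
      have : -(M * t.prod) = M * (-t.prod) := (mul_neg M t.prod).symm
      rw [this]; exact MatNN_mul hM ht
    · right
      have : -(M * t.prod) = (-M) * t.prod := (neg_mul M t.prod).symm
      rw [this]; exact MatNN_mul hM ht
    · left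
      have : M * t.prod = (-M) * (-t.prod) := (neg_mul_neg M t.prod).symm
      rw [this]; exact MatNN_mul hM ht

/-- The conjugating matrices. -/
noncomputable def Sm : Matrix (Fin 2) (Fin 2) (MvPolynomial σ ℤ) := !![1, 1; 1, -1]
noncomputable def Tm : Matrix (Fin 2) (Fin 2) (MvPolynomial σ ℤ) := !![-1, -1; -1, 1]

lemma Sm_mul_Tm : (Sm : Matrix (Fin 2) (Fin 2) R) * Tm = (-2 : R) • 1 := by
  apply Matrix.ext; intro i j
  fin_cases i <;> fin_cases j <;>
    simp [Sm, Tm, Matrix.mul_apply, Fin.sum_univ_two, Matrix.one_apply] <;> ring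

lemma Tm_mul_Sm : (Tm : Matrix (Fin 2) (Fin 2) R) * Sm = (-2 : R) • 1 := by
  apply Matrix.ext; intro i j
  fin_cases i <;> fin_cases j <;>
    simp [Sm, Tm, Matrix.mul_apply, Fin.sum_univ_two, Matrix.one_apply] <;> ring

lemma conj_prod (l : List (Matrix (Fin 2) (Fin 2) R)) :
    (l.map (fun M => Tm * M * Sm)).prod * Tm
      = ((-2 : R) ^ l.length) • (Tm * l.prod) := by
  induction l with
  | nil => simp
  | cons M t ih =>
    rw [List.map_cons, List.prod_cons, List.length_cons, List.prod_cons,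
      Matrix.mul_assoc, ih, Matrix.mul_smul]
    have key : (Tm * M * Sm) * (Tm * t.prod)
        = Tm * (M * ((((-2 : R)) • (1 : Matrix (Fin 2) (Fin 2) R)) * t.prod)) := by
      rw [← Sm_mul_Tm]
      simp only [Matrix.mul_assoc]
    rw [key]
    simp only [Matrix.smul_mul, Matrix.mul_smul, Matrix.one_mul, smul_smul]
    rw [← pow_succ]

/-- the four key computations of Tm * (A B) * Sm -/
lemma key_pp (p q : R) :
    (Tm : Matrix (Fin 2) (Fin 2) R) *
      (!![1, 2 * (1 * (1 + p)); 0, 1] * !![1, 0; -2 * (1 * (1 + q)), 1]) * Sm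
    = !![C 2 + C 2 * p + C 6 * q + C 4 * (p * q),
         C 8 + C 6 * p + C 6 * q + C 4 * (p * q);
         C 0 + C 2 * p + C 2 * q + C 4 * (p * q),
         C 2 + C 6 * p + C 2 * q + C 4 * (p * q)] := by
  apply Matrix.ext; intro i j
  fin_cases i <;> fin_cases j <;>
    simp [Sm, Tm, Matrix.mul_apply, Fin.sum_univ_two, map_ofNat] <;> ring

lemma key_mm (p q : R) :
    (Tm : Matrix (Fin 2) (Fin 2) R) *
      (!![1, 2 * (-1 * (1 + p)); 0, 1] * !![1, 0; -2 * (-1 * (1 + q)), 1]) * Sm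
    = !![C 2 + C 6 * p + C 2 * q + C 4 * (p * q),
         C 0 + C 2 * p + C 2 * q + C 4 * (p * q);
         C 8 + C 6 * p + C 6 * q + C 4 * (p * q),
         C 2 + C 2 * p + C 6 * q + C 4 * (p * q)] := by
  apply Matrix.ext; intro i j
  fin_cases i <;> fin_cases j <;>
    simp [Sm, Tm, Matrix.mul_apply, Fin.sum_univ_two, map_ofNat] <;> ring

lemma key_pm (p q : R) :
    -((Tm : Matrix (Fin 2) (Fin 2) R) *
      (!![1, 2 * (1 * (1 + p)); 0, 1] * !![1, 0; -2 * (-1 * (1 + q)), 1]) * Sm)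
    = !![C 10 + C 6 * p + C 6 * q + C 4 * (p * q),
         C 4 + C 2 * p + C 6 * q + C 4 * (p * q);
         C 4 + C 6 * p + C 2 * q + C 4 * (p * q),
         C 2 + C 2 * p + C 2 * q + C 4 * (p * q)] := by
  apply Matrix.ext; intro i j
  fin_cases i <;> fin_cases j <;>
    simp [Sm, Tm, Matrix.mul_apply, Fin.sum_univ_two, map_ofNat] <;> ring

lemma key_mp (p q : R) :
    -((Tm : Matrix (Fin 2) (Fin 2) R) *
      (!![1, 2 * (-1 * (1 + p)); 0, 1] * !![1, 0; -2 * (1 * (1 + q)), 1]) * Sm)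
    = !![C 2 + C 2 * p + C 2 * q + C 4 * (p * q),
         C 4 + C 6 * p + C 2 * q + C 4 * (p * q);
         C 4 + C 2 * p + C 6 * q + C 4 * (p * q),
         C 10 + C 6 * p + C 6 * q + C 4 * (p * q)] := by
  apply Matrix.ext; intro i j
  fin_cases i <;> fin_cases j <;>
    simp [Sm, Tm, Matrix.mul_apply, Fin.sum_univ_two, map_ofNat] <;> ring

lemma AllNN_entry (a b c d : ℤ) (ha : 0 ≤ a) (hb : 0 ≤ b) (hc : 0 ≤ c) (hd : 0 ≤ d)
    (p q : R) (hp : AllNN p) (hq : AllNN q) :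
    AllNN (C a + C b * p + C c * q + C d * (p * q)) := by
  exact AllNN_add (AllNN_add (AllNN_add (AllNN_C ha) (AllNN_mul (AllNN_C hb) hp))
    (AllNN_mul (AllNN_C hc) hq)) (AllNN_mul (AllNN_C hd) (AllNN_mul hp hq))

lemma MatNN_key (a₁ b₁ c₁ d₁ a₂ b₂ c₂ d₂ a₃ b₃ c₃ d₃ a₄ b₄ c₄ d₄ : ℤ)
    (h₁ : 0 ≤ a₁) (h₂ : 0 ≤ b₁) (h₃ : 0 ≤ c₁) (h₄ : 0 ≤ d₁)
    (h₅ : 0 ≤ a₂) (h₆ : 0 ≤ b₂) (h₇ : 0 ≤ c₂) (h₈ : 0 ≤ d₂)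
    (h₉ : 0 ≤ a₃) (h₁₀ : 0 ≤ b₃) (h₁₁ : 0 ≤ c₃) (h₁₂ : 0 ≤ d₃)
    (h₁₃ : 0 ≤ a₄) (h₁₄ : 0 ≤ b₄) (h₁₅ : 0 ≤ c₄) (h₁₆ : 0 ≤ d₄)
    (p q : R) (hp : AllNN p) (hq : AllNN q) :
    MatNN (!![C a₁ + C b₁ * p + C c₁ * q + C d₁ * (p * q),
              C a₂ + C b₂ * p + C c₂ * q + C d₂ * (p * q);
              C a₃ + C b₃ * p + C c₃ * q + C d₃ * (p * q),
              C a₄ + C b₄ * p + C c₄ * q + C d₄ * (p * q)]) := by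
  intro i j
  fin_cases i <;> fin_cases j <;> simp only [Matrix.cons_val', Matrix.cons_val_zero,
    Matrix.cons_val_one, Matrix.head_cons, Matrix.head_fin_const, Matrix.empty_val',
    Matrix.cons_val_fin_one] <;>
    exact AllNN_entry _ _ _ _ (by assumption) (by assumption) (by assumption)
      (by assumption) p q hp hq

lemma int_sign_pos {a c : ℤ} (ha : 0 < a) (h : 0 ≤ a * c) : 0 ≤ c := by
  by_contra hc
  push_neg at hc
  exact absurd h (not_le.mpr (mul_neg_of_pos_of_neg ha hc))

lemma int_sign_pos' {a c : ℤ} (ha : 0 < a) (h : a * c ≤ 0) : c ≤ 0 := by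
  by_contra hc
  push_neg at hc
  exact absurd h (not_le.mpr (mul_pos ha hc))

lemma int_sign_neg {a c : ℤ} (ha : a < 0) (h : 0 ≤ a * c) : c ≤ 0 := by
  have : 0 ≤ (-a) * (-c) := by nlinarith
  have := int_sign_pos (neg_pos.mpr ha) this
  linarith

lemma int_sign_neg' {a c : ℤ} (ha : a < 0) (h : a * c ≤ 0) : 0 ≤ c := by
  have : (-a) * (-c) ≤ 0 := by nlinarith
  have := int_sign_pos' (neg_pos.mpr ha) this
  linarith

end Aux

/-- The Bergweiler–Eremenko conjecture: for every k ≥ 1 and every choice of 2k signs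
ε_i, δ_i ∈ {1,−1}, the polynomial
tr(A^{ε₁(1+x₁)} B^{δ₁(1+y₁)} ⋯ A^{ε_k(1+x_k)} B^{δ_k(1+y_k)})
has all coefficients of the same sign.  Here A^x = [[1,2x],[0,1]], B^y = [[1,0],[-2y,1]],
and x_i = X (i,0), y_i = X (i,1) are variables of ℤ[x₁,y₁,…,x_k,y_k]. -/
theorem stmt_14 (k : ℕ) (hk : 1 ≤ k) (ε δ : Fin k → ℤ)
    (hε : ∀ i, ε i = 1 ∨ ε i = -1) (hδ : ∀ i, δ i = 1 ∨ δ i = -1) :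
    (∀ m, 0 ≤ MvPolynomial.coeff m (Matrix.trace
        ((List.ofFn (fun i : Fin k =>
          (!![1, 2 * (C (ε i) * (1 + X (i, 0))); 0, 1] :
              Matrix (Fin 2) (Fin 2) (MvPolynomial (Fin k × Fin 2) ℤ)) *
            !![1, 0; -2 * (C (δ i) * (1 + X (i, 1))), 1])).prod))) ∨
    (∀ m, MvPolynomial.coeff m (Matrix.trace
        ((List.ofFn (fun i : Fin k =>
          (!![1, 2 * (C (ε i) * (1 + X (i, 0))); 0, 1] :
              Matrix (Fin 2) (Fin 2) (MvPolynomial (Fin k × Fin 2) ℤ)) *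
            !![1, 0; -2 * (C (δ i) * (1 + X (i, 1))), 1])).prod)) ≤ 0) := by
  classical
  set R := MvPolynomial (Fin k × Fin 2) ℤ
  set f : Fin k → Matrix (Fin 2) (Fin 2) R := fun i =>
    (!![1, 2 * (C (ε i) * (1 + X (i, 0))); 0, 1] :
        Matrix (Fin 2) (Fin 2) R) *
      !![1, 0; -2 * (C (δ i) * (1 + X (i, 1))), 1] with hf
  set P : Matrix (Fin 2) (Fin 2) R := (List.ofFn f).prod with hP
  set Q : Matrix (Fin 2) (Fin 2) R :=
    ((List.ofFn f).map (fun M => Tm * M * Sm)).prod with hQdef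
  -- Step 1: relation between trace Q and trace P
  have hconj := conj_prod (List.ofFn f)
  have hQT : Q * Tm = ((-2 : R) ^ k) • (Tm * P) := by
    rw [hQdef, hconj, List.length_ofFn]
  have hQS : (-2 : R) • Q = ((-2 : R) ^ k) • (Tm * P * Sm) := by
    have h1 : Q * Tm * Sm = ((-2 : R) ^ k) • (Tm * P) * Sm := by rw [hQT]
    rw [Matrix.mul_assoc, Tm_mul_Sm, Matrix.mul_smul, Matrix.mul_one,
      Matrix.smul_mul] at h1
    exact h1
  have htr : (-2 : R) * Matrix.trace Q = ((-2 : R) ^ k) * ((-2 : R) * Matrix.trace P) := by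
    have h2 := congrArg Matrix.trace hQS
    rw [Matrix.trace_smul, Matrix.trace_smul] at h2
    have h3 : Matrix.trace (Tm * P * Sm) = (-2 : R) * Matrix.trace P := by
      rw [Matrix.trace_mul_comm, ← Matrix.mul_assoc, Sm_mul_Tm, Matrix.smul_mul,
        Matrix.one_mul, Matrix.trace_smul]
      simp [smul_eq_mul]
      ring
    rw [h3] at h2
    simpa [smul_eq_mul] using h2
  have hne : (-2 : R) ≠ 0 := by
    have h2 := (MvPolynomial.C_injective (Fin k × Fin 2) ℤ).ne
      (show (-2 : ℤ) ≠ 0 by norm_num)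
    simpa using h2
  have htr' : Matrix.trace Q = ((-2 : R) ^ k) * Matrix.trace P := by
    apply mul_left_cancel₀ hne
    rw [htr]; ring
  -- Step 2: sign of trace Q
  have hsign : ∀ M ∈ (List.ofFn f).map (fun M => Tm * M * Sm), MatNN M ∨ MatNN (-M) := by
    intro M hM
    rw [List.map_ofFn, List.mem_ofFn] at hM
    obtain ⟨i, hi⟩ := hM
    rw [← hi]
    simp only [Function.comp_apply, hf]
    rcases hε i with he | he <;> rcases hδ i with hd | hd <;> rw [he, hd]
    · left
      simp only [he, hd, _root_.map_neg, MvPolynomial.C_1]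
      rw [key_pp]
      exact MatNN_key _ _ _ _ _ _ _ _ _ _ _ _ _ _ _ _
        (by norm_num) (by norm_num) (by norm_num) (by norm_num)
        (by norm_num) (by norm_num) (by norm_num) (by norm_num)
        (by norm_num) (by norm_num) (by norm_num) (by norm_num)
        (by norm_num) (by norm_num) (by norm_num) (by norm_num)
        _ _ (AllNN_X _) (AllNN_X _)
    · right
      simp only [he, hd, _root_.map_neg, MvPolynomial.C_1]
      rw [key_pm]
      exact MatNN_key _ _ _ _ _ _ _ _ _ _ _ _ _ _ _ _
        (by norm_num) (by norm_num) (by norm_num) (by norm_num)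
        (by norm_num) (by norm_num) (by norm_num) (by norm_num)
        (by norm_num) (by norm_num) (by norm_num) (by norm_num)
        (by norm_num) (by norm_num) (by norm_num) (by norm_num)
        _ _ (AllNN_X _) (AllNN_X _)
    · right
      simp only [he, hd, _root_.map_neg, MvPolynomial.C_1]
      rw [key_mp]
      exact MatNN_key _ _ _ _ _ _ _ _ _ _ _ _ _ _ _ _
        (by norm_num) (by norm_num) (by norm_num) (by norm_num)
        (by norm_num) (by norm_num) (by norm_num) (by norm_num)
        (by norm_num) (by norm_num) (by norm_num) (by norm_num)
        (by norm_num) (by norm_num) (by norm_num) (by norm_num)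
        _ _ (AllNN_X _) (AllNN_X _)
    · left
      simp only [he, hd, _root_.map_neg, MvPolynomial.C_1]
      rw [key_mm]
      exact MatNN_key _ _ _ _ _ _ _ _ _ _ _ _ _ _ _ _
        (by norm_num) (by norm_num) (by norm_num) (by norm_num)
        (by norm_num) (by norm_num) (by norm_num) (by norm_num)
        (by norm_num) (by norm_num) (by norm_num) (by norm_num)
        (by norm_num) (by norm_num) (by norm_num) (by norm_num)
        _ _ (AllNN_X _) (AllNN_X _)
  have hQsign := MatNN_prod _ hsign
  rw [← hQdef] at hQsign
  have htrQ : AllNN (Matrix.trace Q) ∨ AllNN (-(Matrix.trace Q)) := by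
    rcases hQsign with h | h
    · left
      rw [Matrix.trace_fin_two]
      exact AllNN_add (h 0 0) (h 1 1)
    · right
      rw [Matrix.trace_fin_two, show -(Q 0 0 + Q 1 1) = (-Q) 0 0 + (-Q) 1 1 from by
        simp [Matrix.neg_apply, neg_add, add_comm]]
      exact AllNN_add (h 0 0) (h 1 1)
  -- Step 3: transfer to trace P
  have hcoeff : ∀ m, MvPolynomial.coeff m (Matrix.trace Q)
      = (-2 : ℤ) ^ k * MvPolynomial.coeff m (Matrix.trace P) := by
    intro m
    rw [htr', show ((-2 : R) ^ k) = C ((-2 : ℤ) ^ k) from by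
      rw [show (-2 : R) = C (-2 : ℤ) from by simp, ← map_pow]]
    rw [MvPolynomial.coeff_C_mul]
  have hane : ((-2 : ℤ) ^ k) ≠ 0 := pow_ne_zero _ (by norm_num)
  rcases Nat.even_or_odd k with hpar | hpar
  · have hapos : 0 < (-2 : ℤ) ^ k := hpar.pow_pos (by norm_num)
    rcases htrQ with h | h
    · left
      intro m
      have := h m
      rw [hcoeff m] at this
      exact int_sign_pos hapos this
    · right
      intro m
      have := h m
      rw [MvPolynomial.coeff_neg, neg_nonneg] at this
      rw [hcoeff m] at this
      exact int_sign_pos' hapos this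
  · have haneg : (-2 : ℤ) ^ k < 0 := hpar.pow_neg (by norm_num)
    rcases htrQ with h | h
    · right
      intro m
      have := h m
      rw [hcoeff m] at this
      exact int_sign_neg haneg this
    · left
      intro m
      have := h m
      rw [MvPolynomial.coeff_neg, neg_nonneg] at this
      rw [hcoeff m] at this
      exact int_sign_neg' haneg this
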